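/- Let V₁, V₂ be finite-dimensional real vector spaces, ρ₁ : SO(3) → GL(V₁) and ρ₂ : SO(3) → GL(V₂) group homomorphisms, μ a Borel measure on S² invariant under the SO(3) action, x₀ ∈ S² a fixed reference point, and c : S² → SO(3) a (measurable) section with c(x)·x₀ = x for all x ∈ S². Let κ : S² → Hom(V₁,V₂) be continuous and satisfy the kernel constraint κ(Q·y) = ρ₂(Q) κ(y) ρ₁(Q)⁻¹ for all y ∈ S² and all Q ∈ SO(3) with Q·x₀ = x₀, and let f : S² → V₁ be continuous. Define [κ ⋆ f](y) = ∫_{S²} ρ₂(c(x)) κ(c(x)⁻¹·y) ρ₁(c(x))⁻¹ f(x) dμ(x). Then for every S ∈ SO(3) and every y ∈ S², [κ ⋆ (π₁(S)f)](y) = ρ₂(S)·[κ ⋆ f](S⁻¹·y), where [π₁(S)f](x) = ρ₁(S) f(S⁻¹·x). -/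

import Mathlib

open Matrix MeasureTheory

noncomputable section

/-- `SO(n)`: the group of `n×n` real orthogonal matrices with determinant `1`, as a subgroup
of the orthogonal group. -/
def SO (n : ℕ) : Subgroup (Matrix.orthogonalGroup (Fin n) ℝ) where
  carrier := {R | (R : Matrix (Fin n) (Fin n) ℝ).det = 1}
  one_mem' := by simp
  mul_mem' := by
    intro a b ha hb
    simp only [Set.mem_setOf_eq, Matrix.UnitaryGroup.mul_val, Matrix.det_mul] at *
    rw [ha, hb, mul_one]
  inv_mem' := by
    intro a ha
    simp only [Set.mem_setOf_eq, Matrix.UnitaryGroup.inv_val] at *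
    rw [Matrix.star_eq_conjTranspose, Matrix.conjTranspose_eq_transpose_of_trivial,
      Matrix.det_transpose]
    exact ha

/-- The matrix underlying an element of `SO(n)`. -/
def SO.mat {n : ℕ} (R : SO n) : Matrix (Fin n) (Fin n) ℝ := R.1.1

/-- The unit sphere `S²` in three-dimensional Euclidean space. -/
abbrev Sphere2 : Type := Metric.sphere (0 : EuclideanSpace ℝ (Fin 3)) 1

theorem norm_mulVec (R : SO 3) (x : EuclideanSpace ℝ (Fin 3)) :
    ‖(show EuclideanSpace ℝ (Fin 3) from WithLp.toLp 2 ((SO.mat R).mulVec x))‖ = ‖x‖ := by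
  have horth : star (SO.mat R) * SO.mat R = 1 := R.1.2.1
  have h : (SO.mat R)ᵀ * SO.mat R = 1 := by
    rwa [Matrix.star_eq_conjTranspose, Matrix.conjTranspose_eq_transpose_of_trivial] at horth
  rw [EuclideanSpace.norm_eq, EuclideanSpace.norm_eq]
  congr 1
  simp only [WithLp.ofLp_toLp]
  have hd : ∀ (w : Fin 3 → ℝ), (∑ i, ‖w i‖ ^ 2) = w ⬝ᵥ w := by
    intro w
    simp [dotProduct, Real.norm_eq_abs, sq_abs, pow_two]
  rw [hd ((SO.mat R).mulVec x), hd x]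
  rw [dotProduct_mulVec]
  congr 1
  calc ((SO.mat R).mulVec x) ᵥ* SO.mat R = (SO.mat R)ᵀ *ᵥ ((SO.mat R) *ᵥ x) := by
        rw [Matrix.mulVec_transpose]
  _ = ((SO.mat R)ᵀ * SO.mat R) *ᵥ x := by rw [Matrix.mulVec_mulVec]
  _ = x := by rw [h, Matrix.one_mulVec]

/-- The action of `SO(3)` on the unit sphere `S²` by matrix-vector multiplication. -/
def SO.act (R : SO 3) (x : Sphere2) : Sphere2 :=
  ⟨WithLp.toLp 2 ((SO.mat R).mulVec x), by
    rw [mem_sphere_zero_iff_norm]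
    exact (norm_mulVec R x).trans (mem_sphere_zero_iff_norm.mp x.2)⟩

instance : MeasurableSpace (Matrix (Fin 3) (Fin 3) ℝ) := borel _
instance : BorelSpace (Matrix (Fin 3) (Fin 3) ℝ) := ⟨rfl⟩

variable {V₁ V₂ : Type*}
  [NormedAddCommGroup V₁] [NormedSpace ℝ V₁] [FiniteDimensional ℝ V₁]
  [NormedAddCommGroup V₂] [NormedSpace ℝ V₂] [FiniteDimensional ℝ V₂]

/-- The spherical convolution with `𝒳 = 𝒴 = S²` defined using a section `c : S² → SO(3)`:
`[κ ⋆ f](y) = ∫_{S²} ρ₂(c(x)) κ(c(x)⁻¹·y) ρ₁(c(x))⁻¹ f(x) dμ(x)`. -/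
def sphereConvSec (ρ₁ : SO 3 →* LinearMap.GeneralLinearGroup ℝ V₁)
    (ρ₂ : SO 3 →* LinearMap.GeneralLinearGroup ℝ V₂) (μ : Measure Sphere2)
    (c : Sphere2 → SO 3) (κ : Sphere2 → (V₁ →ₗ[ℝ] V₂)) (f : Sphere2 → V₁)
    (y : Sphere2) : V₂ :=
  ∫ x, (ρ₂ (c x) : V₂ →ₗ[ℝ] V₂)
    (κ (SO.act (c x)⁻¹ y) ((↑(ρ₁ (c x))⁻¹ : V₁ →ₗ[ℝ] V₁) (f x))) ∂μ

/-!
Lifting `κ` along the section gives the two-point kernel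
`K(x, y) = ρ₂(c x) κ((c x)⁻¹ • y) ρ₁(c x)⁻¹`. Since `(c (g • x))⁻¹ * g * c x` fixes `x₀`, the
kernel constraint removes the dependence on the choice of section and yields
`K(g • x, g • y) = ρ₂(g) K(x, y) ρ₁(g)⁻¹`. Equivariance of `∫ K(x, y) f(x) dμ(x)` then follows
from the substitution `x ↦ g • x`, which preserves the invariant measure `μ`.
-/

section SectionConvolution

variable {G X : Type*} [Group G] [MulAction G X]
  {V₁ V₂ : Type*} [NormedAddCommGroup V₁] [NormedSpace ℝ V₁]
  [NormedAddCommGroup V₂] [NormedSpace ℝ V₂]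
  (ρ₁ : G →* LinearMap.GeneralLinearGroup ℝ V₁) (ρ₂ : G →* LinearMap.GeneralLinearGroup ℝ V₂)

lemma LinearMap.GeneralLinearGroup.coe_monoidHom_mul_apply {R V : Type*} [Semiring R]
    [AddCommMonoid V] [Module R V] (ρ : G →* LinearMap.GeneralLinearGroup R V) (a b : G) (v : V) :
    (ρ (a * b) : V →ₗ[R] V) v = (ρ a : V →ₗ[R] V) ((ρ b : V →ₗ[R] V) v) := by
  rw [map_mul]; rfl

def sectionKernel (c : X → G) (κ : X → V₁ →ₗ[ℝ] V₂) (x y : X) : V₁ →ₗ[ℝ] V₂ :=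
  (ρ₂ (c x) : V₂ →ₗ[ℝ] V₂) ∘ₗ κ ((c x)⁻¹ • y) ∘ₗ (↑(ρ₁ (c x))⁻¹ : V₁ →ₗ[ℝ] V₁)

def sectionConv [MeasurableSpace X] (μ : Measure X) (c : X → G) (κ : X → V₁ →ₗ[ℝ] V₂)
    (f : X → V₁) (y : X) : V₂ :=
  ∫ x, sectionKernel ρ₁ ρ₂ c κ x y (f x) ∂μ

variable {ρ₁ ρ₂} {x₀ : X} {c : X → G}

lemma section_inv_mul_mul_section_smul_basepoint (hc : ∀ x, c x • x₀ = x) (g : G) (x : X) :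
    ((c (g • x))⁻¹ * g * c x) • x₀ = x₀ := by
  rw [mul_smul, mul_smul, hc, inv_smul_eq_iff, hc]

lemma sectionKernel_smul_smul (hc : ∀ x, c x • x₀ = x) {κ : X → V₁ →ₗ[ℝ] V₂}
    (hκ : ∀ Q : G, Q • x₀ = x₀ → ∀ y : X,
      κ (Q • y) = (ρ₂ Q : V₂ →ₗ[ℝ] V₂) ∘ₗ κ y ∘ₗ (↑(ρ₁ Q)⁻¹ : V₁ →ₗ[ℝ] V₁))
    (g : G) (x y : X) (v : V₁) :
    sectionKernel ρ₁ ρ₂ c κ (g • x) (g • y) ((ρ₁ g : V₁ →ₗ[ℝ] V₁) v) =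
      (ρ₂ g : V₂ →ₗ[ℝ] V₂) (sectionKernel ρ₁ ρ₂ c κ x y v) := by
  set Q := (c (g • x))⁻¹ * g * c x with hQ
  have hQy : (c (g • x))⁻¹ • g • y = Q • (c x)⁻¹ • y := by
    rw [smul_smul, smul_smul, hQ]; group
  have hQl : c (g • x) * Q = g * c x := by rw [hQ]; group
  have hQr : Q⁻¹ * ((c (g • x))⁻¹ * g) = (c x)⁻¹ := by rw [hQ]; group
  simp only [sectionKernel, LinearMap.comp_apply, hQy,
    hκ Q (section_inv_mul_mul_section_smul_basepoint hc g x), ← map_inv,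
    ← LinearMap.GeneralLinearGroup.coe_monoidHom_mul_apply, hQl, hQr]

theorem sectionConv_equivariant [FiniteDimensional ℝ V₂] [MeasurableSpace X]
    [MeasurableConstSMul G X] (μ : Measure X) [SMulInvariantMeasure G X μ]
    (hc : ∀ x, c x • x₀ = x) {κ : X → V₁ →ₗ[ℝ] V₂}
    (hκ : ∀ Q : G, Q • x₀ = x₀ → ∀ y : X,
      κ (Q • y) = (ρ₂ Q : V₂ →ₗ[ℝ] V₂) ∘ₗ κ y ∘ₗ (↑(ρ₁ Q)⁻¹ : V₁ →ₗ[ℝ] V₁))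
    (f : X → V₁) (g : G) (y : X) :
    sectionConv ρ₁ ρ₂ μ c κ (fun x => (ρ₁ g : V₁ →ₗ[ℝ] V₁) (f (g⁻¹ • x))) y =
      (ρ₂ g : V₂ →ₗ[ℝ] V₂) (sectionConv ρ₁ ρ₂ μ c κ f (g⁻¹ • y)) := by
  let e : V₂ ≃L[ℝ] V₂ :=
    (LinearMap.GeneralLinearGroup.toLinearEquiv (ρ₂ g)).toContinuousLinearEquiv
  calc sectionConv ρ₁ ρ₂ μ c κ (fun x => (ρ₁ g : V₁ →ₗ[ℝ] V₁) (f (g⁻¹ • x))) y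
      = ∫ x, sectionKernel ρ₁ ρ₂ c κ (g • x) (g • g⁻¹ • y) ((ρ₁ g : V₁ →ₗ[ℝ] V₁) (f x)) ∂μ := by
        rw [sectionConv, ← integral_smul_eq_self (g := g)]
        simp only [inv_smul_smul, smul_inv_smul]
    _ = ∫ x, e (sectionKernel ρ₁ ρ₂ c κ x (g⁻¹ • y) (f x)) ∂μ := by
        simp only [sectionKernel_smul_smul hc hκ]; rfl
    _ = _ := e.integral_comp_comm _

end SectionConvolution

instance : MulAction (SO 3) Sphere2 where
  smul := SO.act
  one_smul x := Subtype.ext <| by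
    change WithLp.toLp 2 ((1 : Matrix (Fin 3) (Fin 3) ℝ) *ᵥ x.1.ofLp) = x.1
    rw [one_mulVec, WithLp.toLp_ofLp]
  mul_smul R R' x := Subtype.ext <| by
    change WithLp.toLp 2 ((SO.mat R * SO.mat R') *ᵥ x.1.ofLp) =
      WithLp.toLp 2 (SO.mat R *ᵥ SO.mat R' *ᵥ x.1.ofLp)
    rw [mulVec_mulVec]

instance : ContinuousConstSMul (SO 3) Sphere2 where
  continuous_const_smul R := by
    change Continuous fun x : Sphere2 => SO.act R x
    unfold SO.act
    fun_prop

theorem sphereConvSec_equivariant_general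
    (ρ₁ : SO 3 →* LinearMap.GeneralLinearGroup ℝ V₁)
    (ρ₂ : SO 3 →* LinearMap.GeneralLinearGroup ℝ V₂)
    (μ : Measure Sphere2) (hμ : ∀ R : SO 3, μ.map (SO.act R) = μ)
    (x₀ : Sphere2) (c : Sphere2 → SO 3) (hc : ∀ x, SO.act (c x) x₀ = x)
    (κ : Sphere2 → (V₁ →ₗ[ℝ] V₂))
    (hconstraint : ∀ Q : SO 3, SO.act Q x₀ = x₀ → ∀ y : Sphere2,
      κ (SO.act Q y) = (ρ₂ Q : V₂ →ₗ[ℝ] V₂) ∘ₗ κ y ∘ₗ (↑(ρ₁ Q)⁻¹ : V₁ →ₗ[ℝ] V₁))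
    (f : Sphere2 → V₁) (S : SO 3) (y : Sphere2) :
    sphereConvSec ρ₁ ρ₂ μ c κ
        (fun x => (ρ₁ S : V₁ →ₗ[ℝ] V₁) (f (SO.act S⁻¹ x))) y =
      (ρ₂ S : V₂ →ₗ[ℝ] V₂) (sphereConvSec ρ₁ ρ₂ μ c κ f (SO.act S⁻¹ y)) := by
  have : SMulInvariantMeasure (SO 3) Sphere2 μ :=
    ((smulInvariantMeasure_tfae (SO 3) μ).out 0 5).mpr hμ
  exact sectionConv_equivariant μ hc hconstraint f S y

/-- Equivariance of the spherical convolution with `𝒳 = 𝒴 = S²`: if the kernel satisfies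
the kernel constraint `κ(Q·y) = ρ₂(Q) κ(y) ρ₁(Q)⁻¹` for all `Q` in the stabilizer of the
reference point `x₀`, and `c : S² → SO(3)` is a measurable section with `c(x)·x₀ = x`, then
`[κ ⋆ (π₁(S)f)](y) = ρ₂(S)·[κ ⋆ f](S⁻¹·y)`, where `[π₁(S)f](x) = ρ₁(S) f(S⁻¹·x)`. -/
theorem sphereConvSec_equivariant
    (ρ₁ : SO 3 →* LinearMap.GeneralLinearGroup ℝ V₁)
    (ρ₂ : SO 3 →* LinearMap.GeneralLinearGroup ℝ V₂)
    (μ : Measure Sphere2) (hμ : ∀ R : SO 3, μ.map (SO.act R) = μ)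
    (x₀ : Sphere2) (c : Sphere2 → SO 3) (hc : ∀ x, SO.act (c x) x₀ = x)
    (hcm : Measurable c)
    (κ : Sphere2 → (V₁ →ₗ[ℝ] V₂)) (hκ : Continuous fun x => ⇑(κ x))
    (hconstraint : ∀ Q : SO 3, SO.act Q x₀ = x₀ → ∀ y : Sphere2,
      κ (SO.act Q y) = (ρ₂ Q : V₂ →ₗ[ℝ] V₂) ∘ₗ κ y ∘ₗ (↑(ρ₁ Q)⁻¹ : V₁ →ₗ[ℝ] V₁))
    (f : Sphere2 → V₁) (hf : Continuous f) (S : SO 3) (y : Sphere2) :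
    sphereConvSec ρ₁ ρ₂ μ c κ
        (fun x => (ρ₁ S : V₁ →ₗ[ℝ] V₁) (f (SO.act S⁻¹ x))) y =
      (ρ₂ S : V₂ →ₗ[ℝ] V₂) (sphereConvSec ρ₁ ρ₂ μ c κ f (SO.act S⁻¹ y)) :=
  sphereConvSec_equivariant_general ρ₁ ρ₂ μ hμ x₀ c hc κ hconstraint f S y

end
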